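/- The unique hyperoval of PHG(2, ℤ/4ℤ) containing the four points spanned by (1,0,0), (0,1,0), (0,0,1) and (1,1,1) consists of these four points together with the three points spanned by (1,2,3), (3,1,2) and (2,3,1). -/
import Mathlib


/-- A point of a projective Hjelmslev geometry PHG(n-1, R): a free rank-1 submodule
of Rⁿ, i.e. the R-span of a vector having at least one unit coordinate. -/
def IsPoint {R : Type} [CommRing R] {n : ℕ} (P : Submodule R (Fin n → R)) : Prop :=
  ∃ v : Fin n → R, (∃ i, IsUnit (v i)) ∧ P = Submodule.span R {v}

/-- A free rank-k submodule of Rⁿ: a submodule linearly isomorphic to Rᵏ. -/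
def IsFreeRank {R : Type} [CommRing R] {n : ℕ} (k : ℕ) (L : Submodule R (Fin n → R)) : Prop :=
  Nonempty ((Fin k → R) ≃ₗ[R] L)

/-- A line of PHG(2, R): a free rank-2 submodule of R³. -/
abbrev IsLine {R : Type} [CommRing R] (L : Submodule R (Fin 3 → R)) : Prop := IsFreeRank 2 L

/-- A hyperoval of PHG(2, R), |R| = 4: a set of 7 points with at most 2 points on each line. -/
def IsHyperoval {R : Type} [CommRing R] (H : Set (Submodule R (Fin 3 → R))) : Prop :=
  (∀ P ∈ H, IsPoint P) ∧ H.ncard = 7 ∧ ∀ L, IsLine L → {P ∈ H | P ≤ L}.ncard ≤ 2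

abbrev R4 := ZMod 4

/-- The point of PHG(2, ℤ/4ℤ) spanned by a vector. -/
def pt (v : Fin 3 → R4) : Submodule R4 (Fin 3 → R4) := Submodule.span R4 {v}

open Matrix

lemma pt_eq_iff {v w : Fin 3 → R4} :
    pt v = pt w ↔ (∃ a : R4, a • w = v) ∧ (∃ a : R4, a • v = w) := by
  constructor
  · intro h
    have h' : Submodule.span R4 {v} = Submodule.span R4 {w} := h
    constructor
    · exact Submodule.mem_span_singleton.mp (h' ▸ Submodule.mem_span_singleton_self v)
    · exact Submodule.mem_span_singleton.mp (h'.symm ▸ Submodule.mem_span_singleton_self w)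
  · rintro ⟨h1, h2⟩
    apply le_antisymm <;>
      · rw [pt, Submodule.span_le, Set.singleton_subset_iff]
        exact Submodule.mem_span_singleton.mpr ‹_›

lemma pt_ne {v w : Fin 3 → R4}
    (h : ¬((∃ a : R4, a • w = v) ∧ (∃ a : R4, a • v = w))) : pt v ≠ pt w :=
  fun he => h (pt_eq_iff.mp he)

def det3 (u v w : Fin 3 → R4) : R4 :=
  u 0 * (v 1 * w 2 - v 2 * w 1) - u 1 * (v 0 * w 2 - v 2 * w 0) + u 2 * (v 0 * w 1 - v 1 * w 0)

lemma det_eq_det3 (a b c : Fin 3 → R4) : (Matrix.of ![a, b, c]).det = det3 a b c := by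
  simp [Matrix.det_fin_three, det3]; ring

/-- The linear map (x,y) ↦ x•a + y•b. -/
def pairMap (a b : Fin 3 → R4) : (Fin 2 → R4) →ₗ[R4] (Fin 3 → R4) where
  toFun x := x 0 • a + x 1 • b
  map_add' x y := by simp only [Pi.add_apply, add_smul]; abel
  map_smul' r x := by simp only [Pi.smul_apply, smul_eq_mul, RingHom.id_apply, smul_smul,
    smul_add]

lemma isLine_of_det3 {a b c : Fin 3 → R4} (h : IsUnit (det3 a b c)) :
    IsLine (Submodule.span R4 ({a, b} : Set (Fin 3 → R4))) := by
  set M : Matrix (Fin 3) (Fin 3) R4 := (Matrix.of ![a, b, c])ᵀ with hM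
  have hdet : IsUnit M.det := by rwa [hM, Matrix.det_transpose, det_eq_det3]
  have hinv : Invertible M := M.invertibleOfIsUnitDet hdet
  let e := M.toLinearEquiv' hinv
  have key : ∀ x : Fin 2 → R4, pairMap a b x = e ![x 0, x 1, 0] := by
    intro x
    have : e ![x 0, x 1, 0] = M.mulVec ![x 0, x 1, 0] := rfl
    rw [this]
    funext i
    fin_cases i <;>
      · simp [pairMap, Matrix.mulVec, dotProduct, Fin.sum_univ_three, hM, Matrix.vecHead, Matrix.vecTail, Matrix.transpose_apply]
        ring
  have hinj : Function.Injective (pairMap a b) := by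
    intro x y hxy
    rw [key, key] at hxy
    have h2 := e.injective hxy
    funext j
    fin_cases j
    · exact congrFun h2 0
    · exact congrFun h2 1
  have hr : LinearMap.range (pairMap a b) = Submodule.span R4 ({a, b} : Set (Fin 3 → R4)) := by
    apply le_antisymm
    · rintro z ⟨x, rfl⟩
      exact Submodule.add_mem _
        (Submodule.smul_mem _ _ (Submodule.subset_span (Set.mem_insert _ _)))
        (Submodule.smul_mem _ _ (Submodule.subset_span (Set.mem_insert_of_mem _ rfl)))
    · rw [Submodule.span_le]
      rintro z (rfl | rfl)
      · exact ⟨![1, 0], by simp [pairMap]⟩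
      · exact ⟨![0, 1], by simp [pairMap]⟩
  exact ⟨(LinearEquiv.ofInjective _ hinj).trans (LinearEquiv.ofEq _ _ hr)⟩

lemma det3_comb (u u' : Fin 3 → R4) (p q r s t z : R4) :
    det3 (p • u + q • u') (r • u + s • u') (t • u + z • u') = 0 := by
  simp only [det3, Pi.add_apply, Pi.smul_apply, smul_eq_mul]
  ring

lemma line_det3 {L : Submodule R4 (Fin 3 → R4)} (hL : IsLine L) {v1 v2 v3 : Fin 3 → R4}
    (h1 : pt v1 ≤ L) (h2 : pt v2 ≤ L) (h3 : pt v3 ≤ L) : det3 v1 v2 v3 = 0 := by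
  obtain ⟨e⟩ := hL
  have mem : ∀ v : Fin 3 → R4, pt v ≤ L → v ∈ L := fun v h =>
    h (Submodule.mem_span_singleton_self v)
  set u : Fin 3 → R4 := ((e ![1, 0] : L) : Fin 3 → R4) with hu
  set u' : Fin 3 → R4 := ((e ![0, 1] : L) : Fin 3 → R4) with hu'
  have key : ∀ v : Fin 3 → R4, ∀ hv : v ∈ L,
      v = (e.symm ⟨v, hv⟩) 0 • u + (e.symm ⟨v, hv⟩) 1 • u' := by
    intro v hv
    set w := e.symm ⟨v, hv⟩ with hw
    have hw2 : w 0 • (![1, 0] : Fin 2 → R4) + w 1 • ![0, 1] = w := by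
      funext j; fin_cases j <;> simp
    have : (⟨v, hv⟩ : L) = w 0 • e ![1, 0] + w 1 • e ![0, 1] := by
      have h3 : e (w 0 • ![1, 0] + w 1 • ![0, 1]) = w 0 • e ![1, 0] + w 1 • e ![0, 1] := by
        rw [map_add, _root_.map_smul, _root_.map_smul]
      rw [← h3, hw2, hw, e.apply_symm_apply]
    calc v = ((⟨v, hv⟩ : L) : Fin 3 → R4) := rfl
      _ = _ := by rw [this]; rfl
  rw [key v1 (mem _ h1), key v2 (mem _ h2), key v3 (mem _ h3)]
  exact det3_comb _ _ _ _ _ _ _ _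

lemma three_on_line_false {H : Set (Submodule R4 (Fin 3 → R4))} (hH : IsHyperoval H)
    {L : Submodule R4 (Fin 3 → R4)} (hL : IsLine L) {P Q S : Submodule R4 (Fin 3 → R4)}
    (hP : P ∈ H) (hQ : Q ∈ H) (hS : S ∈ H)
    (hPL : P ≤ L) (hQL : Q ≤ L) (hSL : S ≤ L)
    (hPQ : P ≠ Q) (hPS : P ≠ S) (hQS : Q ≠ S) : False := by
  have hfin : H.Finite := Set.finite_of_ncard_ne_zero (by rw [hH.2.1]; omega)
  have hsub : {X ∈ H | X ≤ L} ⊆ H := fun x hx => hx.1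
  have h3 : 2 < {X ∈ H | X ≤ L}.ncard :=
    (Set.two_lt_ncard (hfin.subset hsub)).mpr
      ⟨P, ⟨hP, hPL⟩, Q, ⟨hQ, hQL⟩, S, ⟨hS, hSL⟩, hPQ, hPS, hQS⟩
  exact absurd (hH.2.2 L hL) (by omega)

lemma excl {H : Set (Submodule R4 (Fin 3 → R4))} (hH : IsHyperoval H) {v1 v2 t w : Fin 3 → R4}
    (h1 : pt v1 ∈ H) (h2 : pt v2 ∈ H) (hw : pt w ∈ H)
    (hu : IsUnit (det3 v1 v2 t))
    (hm : w ∈ Submodule.span R4 ({v1, v2} : Set (Fin 3 → R4)))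
    (hn1 : pt w ≠ pt v1) (hn2 : pt w ≠ pt v2) (hn3 : pt v1 ≠ pt v2) : False := by
  refine three_on_line_false hH (isLine_of_det3 hu) hw h1 h2 ?_ ?_ ?_ hn1 hn2 hn3
  · rw [pt, Submodule.span_le, Set.singleton_subset_iff]; exact hm
  · rw [pt, Submodule.span_le, Set.singleton_subset_iff]
    exact Submodule.subset_span (Set.mem_insert _ _)
  · rw [pt, Submodule.span_le, Set.singleton_subset_iff]
    exact Submodule.subset_span (Set.mem_insert_of_mem _ rfl)

lemma notMem1 : pt ![1,0,0] ∉ ({pt ![0,1,0], pt ![0,0,1], pt ![1,1,1], pt ![1,2,3], pt ![3,1,2], pt ![2,3,1]} : Set (Submodule R4 (Fin 3 → R4))) := by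
  simp only [Set.mem_insert_iff, Set.mem_singleton_iff]
  push_neg
  exact ⟨pt_ne (by decide), pt_ne (by decide), pt_ne (by decide), pt_ne (by decide), pt_ne (by decide), pt_ne (by decide)⟩

lemma notMem2 : pt ![0,1,0] ∉ ({pt ![0,0,1], pt ![1,1,1], pt ![1,2,3], pt ![3,1,2], pt ![2,3,1]} : Set (Submodule R4 (Fin 3 → R4))) := by
  simp only [Set.mem_insert_iff, Set.mem_singleton_iff]
  push_neg
  exact ⟨pt_ne (by decide), pt_ne (by decide), pt_ne (by decide), pt_ne (by decide), pt_ne (by decide)⟩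

lemma notMem3 : pt ![0,0,1] ∉ ({pt ![1,1,1], pt ![1,2,3], pt ![3,1,2], pt ![2,3,1]} : Set (Submodule R4 (Fin 3 → R4))) := by
  simp only [Set.mem_insert_iff, Set.mem_singleton_iff]
  push_neg
  exact ⟨pt_ne (by decide), pt_ne (by decide), pt_ne (by decide), pt_ne (by decide)⟩

lemma notMem4 : pt ![1,1,1] ∉ ({pt ![1,2,3], pt ![3,1,2], pt ![2,3,1]} : Set (Submodule R4 (Fin 3 → R4))) := by
  simp only [Set.mem_insert_iff, Set.mem_singleton_iff]
  push_neg
  exact ⟨pt_ne (by decide), pt_ne (by decide), pt_ne (by decide)⟩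

lemma notMem5 : pt ![1,2,3] ∉ ({pt ![3,1,2], pt ![2,3,1]} : Set (Submodule R4 (Fin 3 → R4))) := by
  simp only [Set.mem_insert_iff, Set.mem_singleton_iff]
  push_neg
  exact ⟨pt_ne (by decide), pt_ne (by decide)⟩

lemma notMem6 : pt ![3,1,2] ∉ ({pt ![2,3,1]} : Set (Submodule R4 (Fin 3 → R4))) := by
  simp only [Set.mem_singleton_iff]
  exact pt_ne (by decide)

lemma seven_ncard :
    ({pt ![1,0,0], pt ![0,1,0], pt ![0,0,1], pt ![1,1,1],
      pt ![1,2,3], pt ![3,1,2], pt ![2,3,1]} : Set (Submodule R4 (Fin 3 → R4))).ncard = 7 := by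
  rw [Set.ncard_insert_of_notMem notMem1 (Set.toFinite _),
    Set.ncard_insert_of_notMem notMem2 (Set.toFinite _),
    Set.ncard_insert_of_notMem notMem3 (Set.toFinite _),
    Set.ncard_insert_of_notMem notMem4 (Set.toFinite _),
    Set.ncard_insert_of_notMem notMem5 (Set.toFinite _),
    Set.ncard_insert_of_notMem notMem6 (Set.toFinite _),
    Set.ncard_singleton]

lemma seven_points : ∀ P ∈ ({pt ![1,0,0], pt ![0,1,0], pt ![0,0,1], pt ![1,1,1],
      pt ![1,2,3], pt ![3,1,2], pt ![2,3,1]} : Set (Submodule R4 (Fin 3 → R4))), IsPoint P := by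
  intro P hP
  simp only [Set.mem_insert_iff, Set.mem_singleton_iff] at hP
  rcases hP with rfl | rfl | rfl | rfl | rfl | rfl | rfl <;>
    · refine ⟨_, ?_, rfl⟩
      decide

set_option maxHeartbeats 2000000 in
lemma seven_line (L : Submodule R4 (Fin 3 → R4)) (hL : IsLine L) :
    {P ∈ ({pt ![1,0,0], pt ![0,1,0], pt ![0,0,1], pt ![1,1,1],
      pt ![1,2,3], pt ![3,1,2], pt ![2,3,1]} : Set (Submodule R4 (Fin 3 → R4))) | P ≤ L}.ncard ≤ 2 := by
  by_contra hcon
  push_neg at hcon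
  have hfin : {P ∈ ({pt ![1,0,0], pt ![0,1,0], pt ![0,0,1], pt ![1,1,1],
      pt ![1,2,3], pt ![3,1,2], pt ![2,3,1]} : Set (Submodule R4 (Fin 3 → R4))) | P ≤ L}.Finite :=
    (Set.toFinite _).subset (Set.sep_subset _ _)
  obtain ⟨a, ⟨ha, haL⟩, b, ⟨hb, hbL⟩, c, ⟨hc, hcL⟩, hab, hac, hbc⟩ :=
    (Set.two_lt_ncard hfin).mp hcon
  simp only [Set.mem_insert_iff, Set.mem_singleton_iff] at ha hb hc
  rcases ha with rfl | rfl | rfl | rfl | rfl | rfl | rfl <;>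
  rcases hb with rfl | rfl | rfl | rfl | rfl | rfl | rfl <;>
  rcases hc with rfl | rfl | rfl | rfl | rfl | rfl | rfl <;>
    first
      | exact hab rfl
      | exact hac rfl
      | exact hbc rfl
      | exact absurd (line_det3 hL haL hbL hcL) (by decide)

set_option maxHeartbeats 4000000 in
/-- The unique hyperoval of PHG(2, ℤ/4ℤ) containing the four points spanned by
(1,0,0), (0,1,0), (0,0,1), (1,1,1) consists of these four points together with the
points spanned by (1,2,3), (3,1,2) and (2,3,1). -/
theorem canonical_hyperoval (H : Set (Submodule R4 (Fin 3 → R4))) :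
    (IsHyperoval H ∧ {pt ![1,0,0], pt ![0,1,0], pt ![0,0,1], pt ![1,1,1]} ⊆ H) ↔
      H = {pt ![1,0,0], pt ![0,1,0], pt ![0,0,1], pt ![1,1,1],
           pt ![1,2,3], pt ![3,1,2], pt ![2,3,1]} := by
  constructor
  · rintro ⟨hH, hsub⟩
    have h1 : pt ![1,0,0] ∈ H := hsub (Set.mem_insert _ _)
    have h2 : pt ![0,1,0] ∈ H := hsub (Set.mem_insert_of_mem _ (Set.mem_insert _ _))
    have h3 : pt ![0,0,1] ∈ H :=
      hsub (Set.mem_insert_of_mem _ (Set.mem_insert_of_mem _ (Set.mem_insert _ _)))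
    have h4 : pt ![1,1,1] ∈ H :=
      hsub (Set.mem_insert_of_mem _ (Set.mem_insert_of_mem _ (Set.mem_insert_of_mem _ rfl)))
    refine Set.eq_of_subset_of_ncard_le ?_ (le_of_eq (seven_ncard.trans hH.2.1.symm))
      (Set.toFinite _)
    intro P hP
    obtain ⟨w, hunit, rfl⟩ := hH.1 P hP
    obtain ⟨a, b, c, rfl⟩ : ∃ a b c, w = ![a, b, c] :=
      ⟨w 0, w 1, w 2, by funext j; fin_cases j <;> rfl⟩
    fin_cases a <;> fin_cases b <;> fin_cases c
    · exact absurd hunit (by decide)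
    · exact Set.mem_insert_iff.mpr (Or.inr (Set.mem_insert_iff.mpr (Or.inr (Set.mem_insert_iff.mpr (Or.inl (pt_eq_iff.mpr (by decide) : pt ![0,0,1] = pt ![0,0,1]))))))
    · exact absurd hunit (by decide)
    · exact Set.mem_insert_iff.mpr (Or.inr (Set.mem_insert_iff.mpr (Or.inr (Set.mem_insert_iff.mpr (Or.inl (pt_eq_iff.mpr (by decide) : pt ![0,0,3] = pt ![0,0,1]))))))
    · exact Set.mem_insert_iff.mpr (Or.inr (Set.mem_insert_iff.mpr (Or.inl (pt_eq_iff.mpr (by decide) : pt ![0,1,0] = pt ![0,1,0]))))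
    · exact (excl (w := ![0,1,1]) (t := ![0,0,1]) hH h1 h4 hP (by decide)
        (Submodule.mem_span_pair.mpr (by decide)) (pt_ne (by decide)) (pt_ne (by decide))
        (pt_ne (by decide))).elim
    · exact (excl (w := ![0,1,2]) (t := ![1,0,0]) hH h2 h3 hP (by decide)
        (Submodule.mem_span_pair.mpr (by decide)) (pt_ne (by decide)) (pt_ne (by decide))
        (pt_ne (by decide))).elim
    · exact (excl (w := ![0,1,3]) (t := ![1,0,0]) hH h2 h3 hP (by decide)
        (Submodule.mem_span_pair.mpr (by decide)) (pt_ne (by decide)) (pt_ne (by decide))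
        (pt_ne (by decide))).elim
    · exact absurd hunit (by decide)
    · exact (excl (w := ![0,2,1]) (t := ![1,0,0]) hH h2 h3 hP (by decide)
        (Submodule.mem_span_pair.mpr (by decide)) (pt_ne (by decide)) (pt_ne (by decide))
        (pt_ne (by decide))).elim
    · exact absurd hunit (by decide)
    · exact (excl (w := ![0,2,3]) (t := ![1,0,0]) hH h2 h3 hP (by decide)
        (Submodule.mem_span_pair.mpr (by decide)) (pt_ne (by decide)) (pt_ne (by decide))
        (pt_ne (by decide))).elim
    · exact Set.mem_insert_iff.mpr (Or.inr (Set.mem_insert_iff.mpr (Or.inl (pt_eq_iff.mpr (by decide) : pt ![0,3,0] = pt ![0,1,0]))))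
    · exact (excl (w := ![0,3,1]) (t := ![1,0,0]) hH h2 h3 hP (by decide)
        (Submodule.mem_span_pair.mpr (by decide)) (pt_ne (by decide)) (pt_ne (by decide))
        (pt_ne (by decide))).elim
    · exact (excl (w := ![0,3,2]) (t := ![1,0,0]) hH h2 h3 hP (by decide)
        (Submodule.mem_span_pair.mpr (by decide)) (pt_ne (by decide)) (pt_ne (by decide))
        (pt_ne (by decide))).elim
    · exact (excl (w := ![0,3,3]) (t := ![0,0,1]) hH h1 h4 hP (by decide)
        (Submodule.mem_span_pair.mpr (by decide)) (pt_ne (by decide)) (pt_ne (by decide))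
        (pt_ne (by decide))).elim
    · exact Set.mem_insert_iff.mpr (Or.inl (pt_eq_iff.mpr (by decide) : pt ![1,0,0] = pt ![1,0,0]))
    · exact (excl (w := ![1,0,1]) (t := ![0,1,0]) hH h1 h3 hP (by decide)
        (Submodule.mem_span_pair.mpr (by decide)) (pt_ne (by decide)) (pt_ne (by decide))
        (pt_ne (by decide))).elim
    · exact (excl (w := ![1,0,2]) (t := ![0,1,0]) hH h1 h3 hP (by decide)
        (Submodule.mem_span_pair.mpr (by decide)) (pt_ne (by decide)) (pt_ne (by decide))
        (pt_ne (by decide))).elim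
    · exact (excl (w := ![1,0,3]) (t := ![0,1,0]) hH h1 h3 hP (by decide)
        (Submodule.mem_span_pair.mpr (by decide)) (pt_ne (by decide)) (pt_ne (by decide))
        (pt_ne (by decide))).elim
    · exact (excl (w := ![1,1,0]) (t := ![0,0,1]) hH h1 h2 hP (by decide)
        (Submodule.mem_span_pair.mpr (by decide)) (pt_ne (by decide)) (pt_ne (by decide))
        (pt_ne (by decide))).elim
    · exact Set.mem_insert_iff.mpr (Or.inr (Set.mem_insert_iff.mpr (Or.inr (Set.mem_insert_iff.mpr (Or.inr (Set.mem_insert_iff.mpr (Or.inl (pt_eq_iff.mpr (by decide) : pt ![1,1,1] = pt ![1,1,1]))))))))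
    · exact (excl (w := ![1,1,2]) (t := ![0,1,0]) hH h3 h4 hP (by decide)
        (Submodule.mem_span_pair.mpr (by decide)) (pt_ne (by decide)) (pt_ne (by decide))
        (pt_ne (by decide))).elim
    · exact (excl (w := ![1,1,3]) (t := ![0,1,0]) hH h3 h4 hP (by decide)
        (Submodule.mem_span_pair.mpr (by decide)) (pt_ne (by decide)) (pt_ne (by decide))
        (pt_ne (by decide))).elim
    · exact (excl (w := ![1,2,0]) (t := ![0,0,1]) hH h1 h2 hP (by decide)
        (Submodule.mem_span_pair.mpr (by decide)) (pt_ne (by decide)) (pt_ne (by decide))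
        (pt_ne (by decide))).elim
    · exact (excl (w := ![1,2,1]) (t := ![0,0,1]) hH h2 h4 hP (by decide)
        (Submodule.mem_span_pair.mpr (by decide)) (pt_ne (by decide)) (pt_ne (by decide))
        (pt_ne (by decide))).elim
    · exact (excl (w := ![1,2,2]) (t := ![0,0,1]) hH h1 h4 hP (by decide)
        (Submodule.mem_span_pair.mpr (by decide)) (pt_ne (by decide)) (pt_ne (by decide))
        (pt_ne (by decide))).elim
    · exact Set.mem_insert_iff.mpr (Or.inr (Set.mem_insert_iff.mpr (Or.inr (Set.mem_insert_iff.mpr (Or.inr (Set.mem_insert_iff.mpr (Or.inr (Set.mem_insert_iff.mpr (Or.inl (pt_eq_iff.mpr (by decide) : pt ![1,2,3] = pt ![1,2,3]))))))))))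
    · exact (excl (w := ![1,3,0]) (t := ![0,0,1]) hH h1 h2 hP (by decide)
        (Submodule.mem_span_pair.mpr (by decide)) (pt_ne (by decide)) (pt_ne (by decide))
        (pt_ne (by decide))).elim
    · exact (excl (w := ![1,3,1]) (t := ![0,0,1]) hH h2 h4 hP (by decide)
        (Submodule.mem_span_pair.mpr (by decide)) (pt_ne (by decide)) (pt_ne (by decide))
        (pt_ne (by decide))).elim
    · exact Set.mem_insert_iff.mpr (Or.inr (Set.mem_insert_iff.mpr (Or.inr (Set.mem_insert_iff.mpr (Or.inr (Set.mem_insert_iff.mpr (Or.inr (Set.mem_insert_iff.mpr (Or.inr (Set.mem_insert_iff.mpr (Or.inl (pt_eq_iff.mpr (by decide) : pt ![1,3,2] = pt ![3,1,2]))))))))))))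
    · exact (excl (w := ![1,3,3]) (t := ![0,0,1]) hH h1 h4 hP (by decide)
        (Submodule.mem_span_pair.mpr (by decide)) (pt_ne (by decide)) (pt_ne (by decide))
        (pt_ne (by decide))).elim
    · exact absurd hunit (by decide)
    · exact (excl (w := ![2,0,1]) (t := ![0,1,0]) hH h1 h3 hP (by decide)
        (Submodule.mem_span_pair.mpr (by decide)) (pt_ne (by decide)) (pt_ne (by decide))
        (pt_ne (by decide))).elim
    · exact absurd hunit (by decide)
    · exact (excl (w := ![2,0,3]) (t := ![0,1,0]) hH h1 h3 hP (by decide)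
        (Submodule.mem_span_pair.mpr (by decide)) (pt_ne (by decide)) (pt_ne (by decide))
        (pt_ne (by decide))).elim
    · exact (excl (w := ![2,1,0]) (t := ![0,0,1]) hH h1 h2 hP (by decide)
        (Submodule.mem_span_pair.mpr (by decide)) (pt_ne (by decide)) (pt_ne (by decide))
        (pt_ne (by decide))).elim
    · exact (excl (w := ![2,1,1]) (t := ![0,0,1]) hH h1 h4 hP (by decide)
        (Submodule.mem_span_pair.mpr (by decide)) (pt_ne (by decide)) (pt_ne (by decide))
        (pt_ne (by decide))).elim
    · exact (excl (w := ![2,1,2]) (t := ![0,0,1]) hH h2 h4 hP (by decide)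
        (Submodule.mem_span_pair.mpr (by decide)) (pt_ne (by decide)) (pt_ne (by decide))
        (pt_ne (by decide))).elim
    · exact Set.mem_insert_iff.mpr (Or.inr (Set.mem_insert_iff.mpr (Or.inr (Set.mem_insert_iff.mpr (Or.inr (Set.mem_insert_iff.mpr (Or.inr (Set.mem_insert_iff.mpr (Or.inr (Set.mem_insert_iff.mpr (Or.inr (Set.mem_singleton_iff.mpr (pt_eq_iff.mpr (by decide) : pt ![2,1,3] = pt ![2,3,1])))))))))))))
    · exact absurd hunit (by decide)
    · exact (excl (w := ![2,2,1]) (t := ![0,1,0]) hH h3 h4 hP (by decide)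
        (Submodule.mem_span_pair.mpr (by decide)) (pt_ne (by decide)) (pt_ne (by decide))
        (pt_ne (by decide))).elim
    · exact absurd hunit (by decide)
    · exact (excl (w := ![2,2,3]) (t := ![0,1,0]) hH h3 h4 hP (by decide)
        (Submodule.mem_span_pair.mpr (by decide)) (pt_ne (by decide)) (pt_ne (by decide))
        (pt_ne (by decide))).elim
    · exact (excl (w := ![2,3,0]) (t := ![0,0,1]) hH h1 h2 hP (by decide)
        (Submodule.mem_span_pair.mpr (by decide)) (pt_ne (by decide)) (pt_ne (by decide))
        (pt_ne (by decide))).elim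
    · exact Set.mem_insert_iff.mpr (Or.inr (Set.mem_insert_iff.mpr (Or.inr (Set.mem_insert_iff.mpr (Or.inr (Set.mem_insert_iff.mpr (Or.inr (Set.mem_insert_iff.mpr (Or.inr (Set.mem_insert_iff.mpr (Or.inr (Set.mem_singleton_iff.mpr (pt_eq_iff.mpr (by decide) : pt ![2,3,1] = pt ![2,3,1])))))))))))))
    · exact (excl (w := ![2,3,2]) (t := ![0,0,1]) hH h2 h4 hP (by decide)
        (Submodule.mem_span_pair.mpr (by decide)) (pt_ne (by decide)) (pt_ne (by decide))
        (pt_ne (by decide))).elim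
    · exact (excl (w := ![2,3,3]) (t := ![0,0,1]) hH h1 h4 hP (by decide)
        (Submodule.mem_span_pair.mpr (by decide)) (pt_ne (by decide)) (pt_ne (by decide))
        (pt_ne (by decide))).elim
    · exact Set.mem_insert_iff.mpr (Or.inl (pt_eq_iff.mpr (by decide) : pt ![3,0,0] = pt ![1,0,0]))
    · exact (excl (w := ![3,0,1]) (t := ![0,1,0]) hH h1 h3 hP (by decide)
        (Submodule.mem_span_pair.mpr (by decide)) (pt_ne (by decide)) (pt_ne (by decide))
        (pt_ne (by decide))).elim
    · exact (excl (w := ![3,0,2]) (t := ![0,1,0]) hH h1 h3 hP (by decide)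
        (Submodule.mem_span_pair.mpr (by decide)) (pt_ne (by decide)) (pt_ne (by decide))
        (pt_ne (by decide))).elim
    · exact (excl (w := ![3,0,3]) (t := ![0,1,0]) hH h1 h3 hP (by decide)
        (Submodule.mem_span_pair.mpr (by decide)) (pt_ne (by decide)) (pt_ne (by decide))
        (pt_ne (by decide))).elim
    · exact (excl (w := ![3,1,0]) (t := ![0,0,1]) hH h1 h2 hP (by decide)
        (Submodule.mem_span_pair.mpr (by decide)) (pt_ne (by decide)) (pt_ne (by decide))
        (pt_ne (by decide))).elim
    · exact (excl (w := ![3,1,1]) (t := ![0,0,1]) hH h1 h4 hP (by decide)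
        (Submodule.mem_span_pair.mpr (by decide)) (pt_ne (by decide)) (pt_ne (by decide))
        (pt_ne (by decide))).elim
    · exact Set.mem_insert_iff.mpr (Or.inr (Set.mem_insert_iff.mpr (Or.inr (Set.mem_insert_iff.mpr (Or.inr (Set.mem_insert_iff.mpr (Or.inr (Set.mem_insert_iff.mpr (Or.inr (Set.mem_insert_iff.mpr (Or.inl (pt_eq_iff.mpr (by decide) : pt ![3,1,2] = pt ![3,1,2]))))))))))))
    · exact (excl (w := ![3,1,3]) (t := ![0,0,1]) hH h2 h4 hP (by decide)
        (Submodule.mem_span_pair.mpr (by decide)) (pt_ne (by decide)) (pt_ne (by decide))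
        (pt_ne (by decide))).elim
    · exact (excl (w := ![3,2,0]) (t := ![0,0,1]) hH h1 h2 hP (by decide)
        (Submodule.mem_span_pair.mpr (by decide)) (pt_ne (by decide)) (pt_ne (by decide))
        (pt_ne (by decide))).elim
    · exact Set.mem_insert_iff.mpr (Or.inr (Set.mem_insert_iff.mpr (Or.inr (Set.mem_insert_iff.mpr (Or.inr (Set.mem_insert_iff.mpr (Or.inr (Set.mem_insert_iff.mpr (Or.inl (pt_eq_iff.mpr (by decide) : pt ![3,2,1] = pt ![1,2,3]))))))))))
    · exact (excl (w := ![3,2,2]) (t := ![0,0,1]) hH h1 h4 hP (by decide)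
        (Submodule.mem_span_pair.mpr (by decide)) (pt_ne (by decide)) (pt_ne (by decide))
        (pt_ne (by decide))).elim
    · exact (excl (w := ![3,2,3]) (t := ![0,0,1]) hH h2 h4 hP (by decide)
        (Submodule.mem_span_pair.mpr (by decide)) (pt_ne (by decide)) (pt_ne (by decide))
        (pt_ne (by decide))).elim
    · exact (excl (w := ![3,3,0]) (t := ![0,0,1]) hH h1 h2 hP (by decide)
        (Submodule.mem_span_pair.mpr (by decide)) (pt_ne (by decide)) (pt_ne (by decide))
        (pt_ne (by decide))).elim
    · exact (excl (w := ![3,3,1]) (t := ![0,1,0]) hH h3 h4 hP (by decide)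
        (Submodule.mem_span_pair.mpr (by decide)) (pt_ne (by decide)) (pt_ne (by decide))
        (pt_ne (by decide))).elim
    · exact (excl (w := ![3,3,2]) (t := ![0,1,0]) hH h3 h4 hP (by decide)
        (Submodule.mem_span_pair.mpr (by decide)) (pt_ne (by decide)) (pt_ne (by decide))
        (pt_ne (by decide))).elim
    · exact Set.mem_insert_iff.mpr (Or.inr (Set.mem_insert_iff.mpr (Or.inr (Set.mem_insert_iff.mpr (Or.inr (Set.mem_insert_iff.mpr (Or.inl (pt_eq_iff.mpr (by decide) : pt ![3,3,3] = pt ![1,1,1]))))))))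
  · rintro rfl
    refine ⟨⟨seven_points, seven_ncard, seven_line⟩, ?_⟩
    intro P hP
    simp only [Set.mem_insert_iff, Set.mem_singleton_iff] at hP ⊢
    tauto
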